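/- Let R, s, m, c be natural numbers with c ≤ m < R and s + m ≤ R. Then s^c · (R − s)_{m − c} / (R)_m ≤ (s/(R − m))^c · ((R − s)/R)^{m − c}, where (a)_j = a(a−1)⋯(a−j+1) denotes the falling factorial. -/

import Mathlib

/-!
Split `(R)_m = (R - m + c)_c · (R)_{m-c}` and bound the first factor below by `(R - m)^c`; in the
second factor, pair each `R - j` with `R - s - j` and use `(R - s - j) / (R - j) ≤ (R - s) / R`.
-/

namespace Nat

theorem pow_sub_mul_descFactorial_le (n : ℕ) {k m : ℕ} (hkm : k ≤ m) :
    (n - m) ^ k * n.descFactorial (m - k) ≤ n.descFactorial m := by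
  rw [← descFactorial_mul_descFactorial (Nat.sub_le m k), Nat.sub_sub_self hkm]
  gcongr
  calc (n - m) ^ k ≤ (n - (m - k) + 1 - k) ^ k := Nat.pow_le_pow_left (by omega) k
    _ ≤ (n - (m - k)).descFactorial k := pow_sub_le_descFactorial _ k

theorem sub_mul_le_mul_sub {a b : ℕ} (hab : a ≤ b) (j : ℕ) : (a - j) * b ≤ a * (b - j) := by
  rw [Nat.sub_mul, Nat.mul_sub, Nat.mul_comm j b]
  exact Nat.sub_le_sub_left (Nat.mul_le_mul_right j hab) _

theorem descFactorial_sub_mul_pow_le (n s : ℕ) :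
    ∀ k : ℕ, (n - s).descFactorial k * n ^ k ≤ (n - s) ^ k * n.descFactorial k
  | 0 => by simp
  | k + 1 => by
    calc (n - s).descFactorial (k + 1) * n ^ (k + 1)
        = ((n - s - k) * n) * ((n - s).descFactorial k * n ^ k) := by
          rw [descFactorial_succ]; ring
      _ ≤ ((n - s) * (n - k)) * ((n - s) ^ k * n.descFactorial k) :=
          Nat.mul_le_mul (sub_mul_le_mul_sub (Nat.sub_le n s) k)
            (descFactorial_sub_mul_pow_le n s k)
      _ = (n - s) ^ (k + 1) * n.descFactorial (k + 1) := by
          rw [descFactorial_succ]; ring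

theorem descFactorial_sub_mul_pow_mul_pow_le (n s : ℕ) {k m : ℕ} (hkm : k ≤ m) :
    (n - s).descFactorial (m - k) * ((n - m) ^ k * n ^ (m - k))
      ≤ (n - s) ^ (m - k) * n.descFactorial m :=
  calc (n - s).descFactorial (m - k) * ((n - m) ^ k * n ^ (m - k))
      = (n - m) ^ k * ((n - s).descFactorial (m - k) * n ^ (m - k)) := by ring
    _ ≤ (n - m) ^ k * ((n - s) ^ (m - k) * n.descFactorial (m - k)) :=
        Nat.mul_le_mul_left _ (descFactorial_sub_mul_pow_le n s (m - k))
    _ = (n - s) ^ (m - k) * ((n - m) ^ k * n.descFactorial (m - k)) := by ring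
    _ ≤ (n - s) ^ (m - k) * n.descFactorial m :=
        Nat.mul_le_mul_left _ (pow_sub_mul_descFactorial_le n hkm)

end Nat

/-- For naturals `c ≤ m < R` and `s + m ≤ R`,
`s^c · (R-s)_{m-c} / (R)_m ≤ (s/(R-m))^c · ((R-s)/R)^{m-c}`,
where `(a)_j` is the falling factorial. -/
theorem stmt_17 (R s m c : ℕ) (hcm : c ≤ m) (hmR : m < R) (hsm : s + m ≤ R) :
    (s : ℝ) ^ c * ((R - s).descFactorial (m - c)) / (R.descFactorial m)
      ≤ ((s : ℝ) / ((R : ℝ) - m)) ^ c * (((R : ℝ) - s) / R) ^ (m - c) := by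
  have hsR : s ≤ R := by omega
  have hRm : (0 : ℝ) < R - m := sub_pos.2 (by exact_mod_cast hmR)
  have hR : (0 : ℝ) < R := by exact_mod_cast (by omega : 0 < R)
  have hD : (0 : ℝ) < R.descFactorial m := by exact_mod_cast Nat.descFactorial_pos.2 hmR.le
  have key : ((R - s).descFactorial (m - c) : ℝ) * ((R - m) ^ c * R ^ (m - c))
      ≤ (R - s) ^ (m - c) * R.descFactorial m := by
    have := (Nat.cast_le (α := ℝ)).2 (Nat.descFactorial_sub_mul_pow_mul_pow_le R s hcm)
    push_cast [hsR, hmR.le] at this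
    exact this
  rw [div_pow, div_pow, div_mul_div_comm, div_le_div_iff₀ hD (by positivity), mul_assoc,
    mul_assoc]
  exact mul_le_mul_of_nonneg_left key (by positivity)
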